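/- Inexact FEAST error bound: let ρ̂(A) = Σ_k ω_k (z_k I − A)^{-1} be a rational filter of a Hermitian matrix A whose eigenvectors x_1, ..., x_n are orthonormal with filter eigenvalues γ_1, ..., γ_n ordered by decreasing magnitude. Fix j ≤ m_0 with γ_j ≠ 0, let q_j = x_j + w_j with w_j in the span of x_{m_0+1}, ..., x_n, and suppose approximate solutions y_{k,j} of the systems (1/ω_k)(z_k I − A) y_{k,j} = q_j have residuals r_{k,j} = q_j − (1/ω_k)(z_k I − A) y_{k,j} with ||r_{k,j}|| ≤ ε for all k. Then q̃_j = (1/γ_j) Σ_k y_{k,j} satisfies ||q̃_j − x_j|| ≤ (|γ_{m_0+1}| ||w_j|| + ε Δ)/|γ_j|, where Δ = Σ_k ||ω_k (z_k I − A)^{-1}|| (operator 2-norm). -/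

import Mathlib

open Matrix

/-!
On the eigenbasis `x` the filter `∑ₖ ωₖ (zₖ I - A)⁻¹` acts diagonally with eigenvalues `γᵢ`, and
each solve satisfies `yₖ = ωₖ (zₖ I - A)⁻¹ (qⱼ - rₖ)`. Summing over `k` and dividing by `γⱼ` gives
`q̃ⱼ - xⱼ = γⱼ⁻¹ (ρ̂(A) wⱼ - ∑ₖ ωₖ (zₖ I - A)⁻¹ rₖ)`. Since `wⱼ` only has coordinates along
`x_{m₀+1}, …, x_n`, on which `|γᵢ| ≤ |γ_{m₀+1}|`, Parseval bounds the first term by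
`|γ_{m₀+1}| ‖wⱼ‖`, and the triangle inequality bounds the second by `ε Δ`.
-/

section Eigenbasis

variable {R V ι : Type*} [CommSemiring R] [AddCommMonoid V] [Module R V]

theorem Module.Basis.repr_apply_of_apply_eq_smul (b : Module.Basis ι R V) {T : V →ₗ[R] V}
    {μ : ι → R} (hT : ∀ i, T (b i) = μ i • b i) (v : V) (i : ι) :
    b.repr (T v) i = μ i * b.repr v i := by
  have key : (Finsupp.lapply i ∘ₗ b.repr.toLinearMap) ∘ₗ T =
      μ i • (Finsupp.lapply i ∘ₗ b.repr.toLinearMap) := by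
    refine b.ext fun i' => ?_
    by_cases h : i' = i
    · subst h; simp [hT]
    · simp [hT, h]
  exact LinearMap.congr_fun key v

theorem Module.Basis.injective_of_apply_eq_smul [IsCancelMulZero R] (b : Module.Basis ι R V)
    {T : V →ₗ[R] V} {μ : ι → R} (hT : ∀ i, T (b i) = μ i • b i) (hμ : ∀ i, μ i ≠ 0) :
    Function.Injective T := by
  intro u v huv
  refine b.repr.injective (Finsupp.ext fun i => mul_left_cancel₀ (hμ i) ?_)
  rw [← b.repr_apply_of_apply_eq_smul hT, ← b.repr_apply_of_apply_eq_smul hT, huv]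

end Eigenbasis

namespace Matrix

variable {𝕜 ι n : Type*} [RCLike 𝕜] [Fintype n] [DecidableEq n]

theorem isUnit_of_toEuclideanLin_apply_basis_eq_smul {M : Matrix n n 𝕜}
    (b : Module.Basis ι 𝕜 (EuclideanSpace 𝕜 n)) {μ : ι → 𝕜}
    (hM : ∀ i, toEuclideanLin M (b i) = μ i • b i) (hμ : ∀ i, μ i ≠ 0) : IsUnit M :=
  mulVec_injective_iff_isUnit.mp fun _ _ huv =>
    WithLp.toLp_injective 2 (b.injective_of_apply_eq_smul hM hμ (congrArg (WithLp.toLp 2) huv))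

theorem toEuclideanLin_inv_apply_apply {M : Matrix n n 𝕜} (hM : IsUnit M)
    (v : EuclideanSpace 𝕜 n) : toEuclideanLin M⁻¹ (toEuclideanLin M v) = v := by
  change WithLp.toLp 2 (M⁻¹ *ᵥ (M *ᵥ WithLp.ofLp v)) = v
  rw [mulVec_mulVec, nonsing_inv_mul _ ((isUnit_iff_isUnit_det M).mp hM), one_mulVec]

theorem toEuclideanLin_inv_apply_of_apply_eq_smul {M : Matrix n n 𝕜} (hM : IsUnit M)
    {v : EuclideanSpace 𝕜 n} {μ : 𝕜} (hμ : μ ≠ 0) (hv : toEuclideanLin M v = μ • v) :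
    toEuclideanLin M⁻¹ v = μ⁻¹ • v := by
  rw [eq_inv_smul_iff₀ hμ, ← map_smul, ← hv, toEuclideanLin_inv_apply_apply hM]

theorem toEuclideanLin_smul_one_sub_apply {A : Matrix n n 𝕜} {v : EuclideanSpace 𝕜 n} {μ : 𝕜}
    (hv : toEuclideanLin A v = μ • v) (z : 𝕜) :
    toEuclideanLin (z • 1 - A) v = (z - μ) • v := by
  simp [hv, sub_smul]

end Matrix

section OrthonormalBasis

variable {𝕜 ι E : Type*} [RCLike 𝕜] [Fintype ι] [NormedAddCommGroup E] [InnerProductSpace 𝕜 E]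

theorem EuclideanSpace.norm_le_mul_norm_of_forall {u v : EuclideanSpace 𝕜 ι} {C : ℝ}
    (hC : 0 ≤ C) (h : ∀ i, ‖u i‖ ≤ C * ‖v i‖) : ‖u‖ ≤ C * ‖v‖ := by
  rw [EuclideanSpace.norm_eq, EuclideanSpace.norm_eq, ← Real.sqrt_sq hC,
    ← Real.sqrt_mul (sq_nonneg C), Finset.mul_sum]
  gcongr with i
  rw [← mul_pow]
  exact pow_le_pow_left₀ (norm_nonneg _) (h i) 2

theorem OrthonormalBasis.repr_apply_eq_zero_of_mem_span (b : OrthonormalBasis ι 𝕜 E)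
    {s : Set ι} {w : E} (hw : w ∈ Submodule.span 𝕜 (b '' s)) {i : ι} (hi : i ∉ s) :
    b.repr w i = 0 := by
  have hspan : Submodule.span 𝕜 (b '' s) ≤ (𝕜 ∙ b i)ᗮ := by
    rw [Submodule.span_le]
    rintro _ ⟨i', hi', rfl⟩
    exact Submodule.mem_orthogonal_singleton_iff_inner_right.mpr
      (b.orthonormal.inner_eq_zero fun h => hi (h ▸ hi'))
  rw [b.repr_apply_apply]
  exact Submodule.mem_orthogonal_singleton_iff_inner_right.mp (hspan hw)

theorem OrthonormalBasis.norm_apply_le_of_apply_eq_smul (b : OrthonormalBasis ι 𝕜 E)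
    {T : E →ₗ[𝕜] E} {μ : ι → 𝕜} (hT : ∀ i, T (b i) = μ i • b i) {v : E} {C : ℝ} (hC : 0 ≤ C)
    (hv : ∀ i, b.repr v i ≠ 0 → ‖μ i‖ ≤ C) : ‖T v‖ ≤ C * ‖v‖ := by
  rw [← b.repr.norm_map (T v), ← b.repr.norm_map v]
  refine EuclideanSpace.norm_le_mul_norm_of_forall hC fun i => ?_
  have hrepr := b.toBasis.repr_apply_of_apply_eq_smul (by simpa using hT) v i
  simp only [OrthonormalBasis.coe_toBasis_repr_apply] at hrepr
  rw [hrepr, norm_mul]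
  by_cases h0 : b.repr v i = 0
  · simp [h0]
  · exact mul_le_mul_of_nonneg_right (hv i h0) (norm_nonneg _)

end OrthonormalBasis

theorem inexact_filter_error_bound {𝕜 ι κ E : Type*} [RCLike 𝕜] [Fintype ι] [Fintype κ]
    [NormedAddCommGroup E] [InnerProductSpace 𝕜 E] (b : OrthonormalBasis ι 𝕜 E)
    (B : κ → E →L[𝕜] E) {γ : ι → 𝕜} (hB : ∀ i, ∑ k, B k (b i) = γ i • b i) {j : ι}
    (hγj : γ j ≠ 0) {w : E} {C : ℝ} (hC : 0 ≤ C) (hw : ∀ i, b.repr w i ≠ 0 → ‖γ i‖ ≤ C)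
    {y r : κ → E} (hy : ∀ k, y k = B k (b j + w - r k)) {ε : ℝ} (hr : ∀ k, ‖r k‖ ≤ ε) :
    ‖(γ j)⁻¹ • ∑ k, y k - b j‖ ≤ (C * ‖w‖ + ε * ∑ k, ‖B k‖) / ‖γ j‖ := by
  set F : E →L[𝕜] E := ∑ k, B k
  have hF : ∀ i, F (b i) = γ i • b i := fun i => by simpa [F] using hB i
  have hsum : ∑ k, y k = γ j • b j + (F w - ∑ k, B k (r k)) := by
    simp only [hy, map_sub, map_add, Finset.sum_sub_distrib, Finset.sum_add_distrib, hB, F,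
      _root_.sum_apply]
    abel
  have hresidual : ‖∑ k, B k (r k)‖ ≤ ε * ∑ k, ‖B k‖ :=
    calc ‖∑ k, B k (r k)‖ ≤ ∑ k, ‖B k‖ * ε := norm_sum_le_of_le _ fun k _ =>
          (B k).le_opNorm_of_le (hr k)
      _ = ε * ∑ k, ‖B k‖ := by rw [← Finset.sum_mul, mul_comm]
  rw [hsum, smul_add, smul_smul, inv_mul_cancel₀ hγj, one_smul, add_sub_cancel_left, norm_smul,
    norm_inv, inv_mul_eq_div]
  gcongr
  exact (norm_sub_le _ _).trans
    (add_le_add (b.norm_apply_le_of_apply_eq_smul (T := F.toLinearMap) hF hC hw) hresidual)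

theorem stmt6_general {n nc : ℕ} (A : Matrix (Fin n) (Fin n) ℂ)
    (x : Fin n → EuclideanSpace ℂ (Fin n)) (lam : Fin n → ℝ)
    (hortho : Orthonormal ℂ x)
    (heig : ∀ i, Matrix.toEuclideanLin A (x i) = (lam i : ℂ) • x i)
    (z : Fin nc → ℂ) (ω : Fin nc → ℂ)
    (hz : ∀ k i, z k ≠ (lam i : ℂ)) (hω : ∀ k, ω k ≠ 0)
    (γ : Fin n → ℂ) (hγ : ∀ i, γ i = ∑ k, ω k * (z k - (lam i : ℂ))⁻¹)
    (hord : ∀ i i' : Fin n, i ≤ i' → ‖γ i'‖ ≤ ‖γ i‖)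
    (m0 : ℕ) (hm0 : m0 < n) (j : Fin n) (hγj : γ j ≠ 0)
    (w q : EuclideanSpace ℂ (Fin n))
    (hw : w ∈ Submodule.span ℂ {v | ∃ i : Fin n, m0 ≤ (i : ℕ) ∧ v = x i})
    (hq : q = x j + w)
    (y : Fin nc → EuclideanSpace ℂ (Fin n)) (r : Fin nc → EuclideanSpace ℂ (Fin n))
    (ε : ℝ)
    (hr : ∀ k, r k = q - (ω k)⁻¹ •
      Matrix.toEuclideanLin (z k • (1 : Matrix (Fin n) (Fin n) ℂ) - A) (y k))
    (hrε : ∀ k, ‖r k‖ ≤ ε)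
    (qt : EuclideanSpace ℂ (Fin n)) (hqt : qt = (γ j)⁻¹ • ∑ k, y k)
    (Δ : ℝ)
    (hΔ : Δ = ∑ k, ‖Matrix.toEuclideanCLM (𝕜 := ℂ)
      (ω k • (z k • (1 : Matrix (Fin n) (Fin n) ℂ) - A)⁻¹)‖) :
    ‖qt - x j‖ ≤ (‖γ ⟨m0, hm0⟩‖ * ‖w‖ + ε * Δ) / ‖γ j‖ := by
  obtain ⟨b, rfl⟩ : ∃ b : OrthonormalBasis (Fin n) ℂ (EuclideanSpace ℂ (Fin n)), ⇑b = x :=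
    ⟨.mk hortho (hortho.linearIndependent.span_eq_top_of_card_eq_finrank' (by simp)).ge,
      OrthonormalBasis.coe_mk _ _⟩
  set M : Fin nc → Matrix (Fin n) (Fin n) ℂ := fun k => z k • 1 - A
  have hMb : ∀ k i, toEuclideanLin (M k) (b i) = (z k - lam i) • b i := fun k i =>
    toEuclideanLin_smul_one_sub_apply (heig i) (z k)
  have hMunit : ∀ k, IsUnit (M k) := fun k =>
    isUnit_of_toEuclideanLin_apply_basis_eq_smul b.toBasis (by simpa using hMb k)
      fun i => sub_ne_zero.mpr (hz k i)
  set B : Fin nc → _ := fun k => toEuclideanCLM (𝕜 := ℂ) (ω k • (M k)⁻¹)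
  have hBapply : ∀ k v, B k v = ω k • toEuclideanLin (M k)⁻¹ v := fun k v => by
    simp only [B, map_smul]; rfl
  have hB : ∀ i, ∑ k, B k (b i) = γ i • b i := fun i => by
    simp only [hBapply, toEuclideanLin_inv_apply_of_apply_eq_smul (hMunit _)
      (sub_ne_zero.mpr (hz _ i)) (hMb _ i), smul_smul, ← Finset.sum_smul, hγ]
  have hy : ∀ k, y k = B k (b j + w - r k) := fun k => by
    have hsolve : toEuclideanLin (M k) (y k) = ω k • (q - r k) := by
      rw [hr k, sub_sub_cancel, smul_inv_smul₀ (hω k)]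
    rw [hBapply, ← hq, ← map_smul, ← hsolve, toEuclideanLin_inv_apply_apply (hMunit k)]
  have hw_span : w ∈ Submodule.span ℂ (b '' {i | m0 ≤ (i : ℕ)}) := by
    convert hw using 2
    ext v
    constructor <;> rintro ⟨i, hi, rfl⟩ <;> exact ⟨i, hi, rfl⟩
  have hw' : ∀ i, b.repr w i ≠ 0 → ‖γ i‖ ≤ ‖γ ⟨m0, hm0⟩‖ := fun i hi =>
    hord _ i (not_lt.mp fun hlt => hi (b.repr_apply_eq_zero_of_mem_span hw_span (not_le.mpr hlt)))
  subst hqt hΔ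
  exact inexact_filter_error_bound b B hB hγj (norm_nonneg _) hw' hy hrε

/-- Inexact FEAST error bound. `A` Hermitian with orthonormal eigenvectors `x i`,
eigenvalues `lam i`; filter eigenvalues `γ i = Σ_k ω_k (z_k − λ_i)⁻¹` ordered by decreasing
magnitude; `j < m0 < n` (0-indexed), `γ_j ≠ 0`; `q = x j + w` with `w` in the span of the
trailing eigenvectors; approximate solves `y k` of `(1/ω_k)(z_k I − A) y_k = q` have residuals
`r k = q − (1/ω_k)(z_k I − A) y_k` with `‖r k‖ ≤ ε`.  Then `q̃ = (1/γ_j) Σ_k y_k` satisfies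
`‖q̃ − x j‖ ≤ (|γ_{m0+1}| ‖w‖ + ε Δ)/|γ_j|` with `Δ = Σ_k ‖ω_k (z_k I − A)⁻¹‖` (op. 2-norm). -/
theorem stmt6 {n nc : ℕ} (A : Matrix (Fin n) (Fin n) ℂ) (hA : A.IsHermitian)
    (x : Fin n → EuclideanSpace ℂ (Fin n)) (lam : Fin n → ℝ)
    (hortho : Orthonormal ℂ x)
    (heig : ∀ i, Matrix.toEuclideanLin A (x i) = (lam i : ℂ) • x i)
    (z : Fin nc → ℂ) (ω : Fin nc → ℂ)
    (hz : ∀ k i, z k ≠ (lam i : ℂ)) (hω : ∀ k, ω k ≠ 0)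
    (γ : Fin n → ℂ) (hγ : ∀ i, γ i = ∑ k, ω k * (z k - (lam i : ℂ))⁻¹)
    (hord : ∀ i i' : Fin n, i ≤ i' → ‖γ i'‖ ≤ ‖γ i‖)
    (m0 : ℕ) (hm0 : m0 < n) (j : Fin n) (hj : (j : ℕ) < m0) (hγj : γ j ≠ 0)
    (w q : EuclideanSpace ℂ (Fin n))
    (hw : w ∈ Submodule.span ℂ {v | ∃ i : Fin n, m0 ≤ (i : ℕ) ∧ v = x i})
    (hq : q = x j + w)
    (y : Fin nc → EuclideanSpace ℂ (Fin n)) (r : Fin nc → EuclideanSpace ℂ (Fin n))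
    (ε : ℝ)
    (hr : ∀ k, r k = q - (ω k)⁻¹ •
      Matrix.toEuclideanLin (z k • (1 : Matrix (Fin n) (Fin n) ℂ) - A) (y k))
    (hrε : ∀ k, ‖r k‖ ≤ ε)
    (qt : EuclideanSpace ℂ (Fin n)) (hqt : qt = (γ j)⁻¹ • ∑ k, y k)
    (Δ : ℝ)
    (hΔ : Δ = ∑ k, ‖Matrix.toEuclideanCLM (𝕜 := ℂ)
      (ω k • (z k • (1 : Matrix (Fin n) (Fin n) ℂ) - A)⁻¹)‖) :
    ‖qt - x j‖ ≤ (‖γ ⟨m0, hm0⟩‖ * ‖w‖ + ε * Δ) / ‖γ j‖ :=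
  stmt6_general A x lam hortho heig z ω hz hω γ hγ hord m0 hm0 j hγj w q hw hq y r ε hr hrε qt hqt Δ
    hΔ
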